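/- arXiv:2012.14641 — 3 statements merged into one kernel-verified Lean document; each statement's English description precedes it below -/
import Mathlib

section
/- For every generalized pseudometric space X, the functor X × − : PMet → PMet preserves filtered colimits. -/
open CategoryTheory CategoryTheory.Limits

/-- The category of generalized (extended-real-valued) metric spaces with
nonexpanding (1-Lipschitz) maps. -/
structure MetCat : Type 1 where
  carrier : Type
  [str : EMetricSpace carrier]

attribute [instance] MetCat.str

instance : CoeSort MetCat Type := ⟨MetCat.carrier⟩

instance : Category MetCat where
  Hom X Y := {f : X.carrier → Y.carrier // LipschitzWith 1 f}
  id X := ⟨id, LipschitzWith.id⟩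
  comp f g := ⟨g.1 ∘ f.1, (by simpa using g.2.comp f.2)⟩

/-- The category of generalized pseudometric spaces with nonexpanding maps. -/
structure PMetCat : Type 1 where
  carrier : Type
  [str : PseudoEMetricSpace carrier]

attribute [instance] PMetCat.str

instance : CoeSort PMetCat Type := ⟨PMetCat.carrier⟩

instance : Category PMetCat where
  Hom X Y := {f : X.carrier → Y.carrier // LipschitzWith 1 f}
  id X := ⟨id, LipschitzWith.id⟩
  comp f g := ⟨g.1 ∘ f.1, (by simpa using g.2.comp f.2)⟩

/-- The full inclusion of metric spaces into pseudometric spaces. -/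
def metToPMet : MetCat ⥤ PMetCat where
  obj X := ⟨X.carrier⟩
  map f := ⟨f.1, f.2⟩

/-- The functor `X × - : PMet ⥤ PMet` (products carry the sup-metric). -/
def PMetCat.prodFunctor (X : PMetCat) : PMetCat ⥤ PMetCat where
  obj Y := ⟨X.carrier × Y.carrier⟩
  map f := ⟨Prod.map id f.1, LipschitzWith.of_edist_le fun p q => by
    simp only [Prod.edist_eq, Prod.map_fst, Prod.map_snd, Prod.map]
    exact max_le_max le_rfl (by simpa using f.2.edist_le_mul _ _)⟩

/-!
A filtered colimit in `PMetCat` is the filtered colimit of the underlying sets, the distance of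
two points being the infimum of `edist x y` over representatives `x`, `y` in a common stage of
the diagram. Moreover, any cocone is a colimit as soon as its underlying cocone of sets is one and
its distance dominates that infimum, since then every induced map is nonexpanding. Filtered
colimits of sets commute with `X × -`, and
`max (edist x y) (⨅ i, d i) = ⨅ i, max (edist x y) (d i)`, so the image under `X × -` of the
colimit cocone again satisfies both conditions.
-/

open scoped ENNReal

namespace PMetCat

lemma edist_hom_le {Y Z : PMetCat} (f : Y ⟶ Z) (a b : Y) : edist (f.1 a) (f.1 b) ≤ edist a b := by
  simpa using f.2.edist_le_mul a b

def forget : PMetCat ⥤ Type where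
  obj Y := Y
  map f := TypeCat.ofHom f.1

variable {J : Type} [SmallCategory J] {F : J ⥤ PMetCat}

/-- For a filtered diagram, this is the distance of its colimit (see `liftCocone`). -/
noncomputable def reprEdist {P : Type} (ι : ∀ j, F.obj j → P) (a b : P) : ℝ≥0∞ :=
  ⨅ (l : J) (x : F.obj l) (y : F.obj l) (_ : ι l x = a) (_ : ι l y = b), edist x y

lemma reprEdist_le {P : Type} (ι : ∀ j, F.obj j → P) {l : J} (x y : F.obj l) :
    reprEdist ι (ι l x) (ι l y) ≤ edist x y :=
  iInf_le_of_le l <| iInf_le_of_le x <| iInf_le_of_le y <| iInf_le_of_le rfl <| iInf_le _ rfl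

lemma edist_le_reprEdist {P Q : Type} [PseudoEMetricSpace Q] (ι : ∀ j, F.obj j → P) (g : P → Q)
    (hg : ∀ l (x y : F.obj l), edist (g (ι l x)) (g (ι l y)) ≤ edist x y) (a b : P) :
    edist (g a) (g b) ≤ reprEdist ι a b := by
  simp only [reprEdist, le_iInf_iff]
  rintro l x y rfl rfl
  exact hg l x y

lemma reprEdist_comm {P : Type} (ι : ∀ j, F.obj j → P) (a b : P) :
    reprEdist ι a b = reprEdist ι b a := by
  have key : ∀ a b, reprEdist ι b a ≤ reprEdist ι a b := by
    intro a b
    simp only [reprEdist, le_iInf_iff]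
    rintro l x y rfl rfl
    exact (reprEdist_le ι y x).trans (edist_comm y x).le
  exact le_antisymm (key b a) (key a b)

lemma desc_forget_mapCocone_apply {c : Cocone F} (hc : IsColimit (forget.mapCocone c))
    (s : Cocone F) (j : J) (x : F.obj j) :
    hc.desc (forget.mapCocone s) ((c.ι.app j).1 x) = (s.ι.app j).1 x :=
  ConcreteCategory.congr_hom (hc.fac (forget.mapCocone s) j) x

def isColimitOfReprEdistLe (c : Cocone F) (hc : IsColimit (forget.mapCocone c))
    (hdist : ∀ a b : c.pt, reprEdist (fun j => (c.ι.app j).1) a b ≤ edist a b) : IsColimit c where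
  desc s := ⟨hc.desc (forget.mapCocone s), LipschitzWith.of_edist_le fun a b =>
    (edist_le_reprEdist _ _ (fun l x y => by
      rw [desc_forget_mapCocone_apply, desc_forget_mapCocone_apply]
      exact edist_hom_le _ x y) a b).trans (hdist a b)⟩
  fac s j := Subtype.ext <| funext <| desc_forget_mapCocone_apply hc s j
  uniq s m hm := Subtype.ext <| funext <| ConcreteCategory.congr_hom <|
    hc.uniq (forget.mapCocone s) (forget.map m) fun j => congrArg forget.map (hm j)

lemma reprEdist_prodFunctor_mapCocone_le (X : PMetCat) (c : Cocone F) (x y : X) (a b : c.pt) :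
    reprEdist (fun j => (((prodFunctor X).mapCocone c).ι.app j).1) (x, a) (y, b) ≤
      max (edist x y) (reprEdist (fun j => (c.ι.app j).1) a b) := by
  simp only [reprEdist, sup_iInf_eq, le_iInf_iff]
  rintro l p q rfl rfl
  exact iInf_le_of_le l <| iInf_le_of_le (x, p) <| iInf_le_of_le (y, q) <|
    iInf_le_of_le rfl <| iInf_le_of_le rfl le_rfl

section Filtered

variable [IsFiltered J]

section

variable {t : Cocone (F ⋙ forget)} (ht : IsColimit t)
include ht

lemma reprEdist_triangle (a b c : t.pt) :
    reprEdist (fun j => t.ι.app j) a c ≤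
      reprEdist (fun j => t.ι.app j) a b + reprEdist (fun j => t.ι.app j) b c := by
  simp only [reprEdist, ENNReal.iInf_add, ENNReal.add_iInf, le_iInf_iff]
  rintro l' y' z hy' rfl l x y rfl hy
  obtain ⟨m, f, g, hfg⟩ : ∃ (m : J) (f : l ⟶ m) (g : l' ⟶ m), (F.map f).1 y = (F.map g).1 y' :=
    (Types.FilteredColimit.isColimit_eq_iff _ ht).1 (hy.trans hy'.symm)
  have hx : t.ι.app m ((F.map f).1 x) = t.ι.app l x := ConcreteCategory.congr_hom (t.w f) x
  have hz : t.ι.app m ((F.map g).1 z) = t.ι.app l' z := ConcreteCategory.congr_hom (t.w g) z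
  calc _ ≤ edist ((F.map f).1 x) ((F.map g).1 z) := hx ▸ hz ▸ reprEdist_le _ _ _
    _ ≤ edist ((F.map f).1 x) ((F.map f).1 y) + edist ((F.map g).1 y') ((F.map g).1 z) :=
      hfg ▸ edist_triangle _ _ _
    _ ≤ edist x y + edist y' z := add_le_add (edist_hom_le _ _ _) (edist_hom_le _ _ _)

noncomputable abbrev reprPseudoEMetricSpace : PseudoEMetricSpace t.pt where
  edist := reprEdist fun j => t.ι.app j
  edist_self a := by
    obtain ⟨j, x, rfl⟩ : ∃ (j : J) (x : F.obj j), t.ι.app j x = a :=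
      Types.jointly_surjective_of_isColimit ht a
    exact le_antisymm ((reprEdist_le _ x x).trans_eq (edist_self x)) zero_le
  edist_comm := reprEdist_comm _
  edist_triangle := reprEdist_triangle ht

noncomputable def liftCocone : Cocone F where
  pt := { carrier := t.pt, str := reprPseudoEMetricSpace ht }
  ι :=
    { app j := ⟨t.ι.app j, LipschitzWith.of_edist_le (reprEdist_le _)⟩
      naturality _ _ f := Subtype.ext <| funext <| ConcreteCategory.congr_hom (t.w f) }

noncomputable def isColimitLiftCocone : IsColimit (liftCocone ht) :=
  isColimitOfReprEdistLe _ ht fun _ _ => le_rfl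

end

noncomputable def isColimitForgetMapCoconeProdFunctor (X : PMetCat) {c : Cocone F}
    (hc : IsColimit (forget.mapCocone c)) :
    IsColimit (forget.mapCocone ((prodFunctor X).mapCocone c)) := by
  refine Types.FilteredColimit.isColimitOf _ _ ?_ ?_
  · rintro ⟨x, a⟩
    obtain ⟨j, p, rfl⟩ : ∃ (j : J) (p : F.obj j), (c.ι.app j).1 p = a :=
      Types.jointly_surjective_of_isColimit hc a
    exact ⟨j, (x, p), rfl⟩
  · rintro i j ⟨x, p⟩ ⟨y, q⟩ h
    obtain ⟨hxy, hpq⟩ := Prod.ext_iff.1 h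
    obtain ⟨k, f, g, hfg⟩ := (Types.FilteredColimit.isColimit_eq_iff _ hc).1 hpq
    exact ⟨k, f, g, Prod.ext hxy hfg⟩

noncomputable def isColimitProdFunctorMapCocone (X : PMetCat) {c : Cocone F}
    (hc : IsColimit (forget.mapCocone c))
    (hdist : ∀ a b : c.pt, reprEdist (fun j => (c.ι.app j).1) a b ≤ edist a b) :
    IsColimit ((prodFunctor X).mapCocone c) :=
  isColimitOfReprEdistLe _ (isColimitForgetMapCoconeProdFunctor X hc) fun ⟨x, a⟩ ⟨y, b⟩ =>
    (reprEdist_prodFunctor_mapCocone_le X c x y a b).trans (max_le_max le_rfl (hdist a b))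

end Filtered

end PMetCat

/-- For every generalized pseudometric space `X`, the functor
`X × - : PMet ⥤ PMet` preserves filtered colimits. -/
theorem prodFunctor_preserves_filtered_colimits (X : PMetCat)
    (J : Type) [SmallCategory J] [IsFiltered J] :
    Nonempty (PreservesColimitsOfShape J (PMetCat.prodFunctor X)) := by
  refine ⟨⟨fun {F} => ?_⟩⟩
  let ht := colimit.isColimit (F ⋙ PMetCat.forget)
  exact preservesColimit_of_preserves_colimit_cocone (PMetCat.isColimitLiftCocone ht)
    (PMetCat.isColimitProdFunctorMapCocone X ht fun _ _ => le_rfl)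
end

section
/- In the category Met of generalized metric spaces and nonexpanding maps, finite products commute with filtered colimits; that is, for every finite family of filtered diagrams in Met, the canonical comparison map from the colimit of the products to the product of the colimits is an isomorphism. -/
open CategoryTheory CategoryTheory.Limits

/-- Finite product of generalized metric spaces, with the sup-metric. -/
def MetCat.pi {n : ℕ} (A : Fin n → MetCat) : MetCat := ⟨∀ i, (A i).carrier⟩

/-- The product of a family of nonexpanding maps. -/
def MetCat.piMap {n : ℕ} {A B : Fin n → MetCat} (f : ∀ i, A i ⟶ B i) :
    MetCat.pi A ⟶ MetCat.pi B :=
  ⟨fun x i => (f i).1 (x i), LipschitzWith.of_edist_le fun (x y : ∀ i, (A i).carrier) => by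
    show edist (fun i => (f i).1 (x i)) (fun i => (f i).1 (y i)) ≤ edist x y
    rw [edist_pi_def, edist_pi_def]
    exact Finset.sup_mono_fun fun i _ => by simpa using (f i).2.edist_le_mul (x i) (y i)⟩

/-- The pointwise product of a finite family of diagrams in `Met`. -/
def MetCat.prodDiagram {J : Type} [SmallCategory J] {n : ℕ}
    (F : Fin n → J ⥤ MetCat) : J ⥤ MetCat where
  obj j := MetCat.pi fun i => (F i).obj j
  map h := MetCat.piMap fun i => (F i).map h
  map_id j := by
    apply Subtype.ext
    funext x i
    show ((F i).map (𝟙 j)).1 (x i) = x i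
    rw [(F i).map_id]
    rfl
  map_comp h k := by
    apply Subtype.ext
    funext x i
    show ((F i).map (_ ≫ _)).1 (x i) = ((F i).map k).1 (((F i).map h).1 (x i))
    rw [(F i).map_comp]
    rfl

/-- The product of a family of cocones, a cocone over the product diagram. -/
def MetCat.prodCocone {J : Type} [SmallCategory J] {n : ℕ}
    {F : Fin n → J ⥤ MetCat} (c : ∀ i, Cocone (F i)) : Cocone (MetCat.prodDiagram F) where
  pt := MetCat.pi fun i => (c i).pt
  ι :=
    { app := fun j => MetCat.piMap fun i => (c i).ι.app j
      naturality := fun j k h => by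
        apply Subtype.ext
        funext x i
        show ((c i).ι.app k).1 (((F i).map h).1 (x i)) = ((c i).ι.app j).1 (x i)
        exact congrFun (congrArg Subtype.val ((c i).ι.naturality h)) (x i) }

/-!
In `Met` the colimit of a filtered diagram `F` is the set of points `x ∈ F j` of all stages,
at distance `d(x, y) = inf d(F f x, F g y)` over all cospans `f : j ⟶ l ⟵ k : g`, with
points at distance `0` identified; filteredness gives the triangle inequality. Conversely every
colimit cocone is jointly surjective and carries exactly these distances, and any cocone with
these two properties is a colimit.

The distance along a cospan only decreases when the cospan is refined, and the cospans of a
filtered category form a directed set. Hence for finitely many diagrams the supremum of these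
infima is the infimum of the suprema, i.e. the product of the colimits again carries the
colimit distances of the product diagram, and is therefore its colimit.
-/

open scoped ENNReal

namespace MetCat

variable {J : Type} [SmallCategory J]

lemma edist_apply_le {X Y : MetCat} (f : X ⟶ Y) (x y : X) :
    edist (f.1 x) (f.1 y) ≤ edist x y := by
  simpa using f.2 x y

lemma hom_inv_id_apply {X Y : MetCat} (e : X ≅ Y) (x : X) : e.inv.1 (e.hom.1 x) = x :=
  congrFun (congrArg Subtype.val e.hom_inv_id) x

lemma inv_hom_id_apply {X Y : MetCat} (e : X ≅ Y) (y : Y) : e.hom.1 (e.inv.1 y) = y :=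
  congrFun (congrArg Subtype.val e.inv_hom_id) y

lemma edist_iso_hom_apply {X Y : MetCat} (e : X ≅ Y) (x y : X) :
    edist (e.hom.1 x) (e.hom.1 y) = edist x y := by
  refine le_antisymm (edist_apply_le e.hom x y) ?_
  calc edist x y = edist (e.inv.1 (e.hom.1 x)) (e.inv.1 (e.hom.1 y)) := by
        rw [hom_inv_id_apply, hom_inv_id_apply]
    _ ≤ edist (e.hom.1 x) (e.hom.1 y) := edist_apply_le e.inv _ _

lemma edist_pi_eq_iSup {n : ℕ} {A : Fin n → MetCat} (x y : MetCat.pi A) :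
    edist x y = ⨆ i, edist (x i) (y i) :=
  (edist_pi_def (X := fun i => A i) x y).trans (Finset.sup_univ_eq_iSup _)

lemma map_comp_apply (F : J ⥤ MetCat) {j k l : J} (f : j ⟶ k) (g : k ⟶ l) (x : F.obj j) :
    (F.map (f ≫ g)).1 x = (F.map g).1 ((F.map f).1 x) := by
  rw [F.map_comp]; rfl

@[simp] lemma id_apply (X : MetCat) (x : X) : (𝟙 X : X ⟶ X).1 x = x := rfl

lemma ι_map_apply {F : J ⥤ MetCat} (c : Cocone F) {j k : J} (f : j ⟶ k) (x : F.obj j) :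
    (c.ι.app k).1 ((F.map f).1 x) = (c.ι.app j).1 x :=
  congrFun (congrArg Subtype.val (c.w f)) x

structure Cospan (j k : J) where
  pt : J
  inl : j ⟶ pt
  inr : k ⟶ pt

namespace Cospan

variable {j k : J}

instance : Preorder (Cospan j k) where
  le s t := ∃ w : s.pt ⟶ t.pt, s.inl ≫ w = t.inl ∧ s.inr ≫ w = t.inr
  le_refl s := ⟨𝟙 s.pt, Category.comp_id _, Category.comp_id _⟩
  le_trans := by
    rintro s t u ⟨v, hv₁, hv₂⟩ ⟨w, hw₁, hw₂⟩
    exact ⟨v ≫ w, by rw [← Category.assoc, hv₁, hw₁],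
      by rw [← Category.assoc, hv₂, hw₂]⟩

variable [IsFilteredOrEmpty J]

instance : Nonempty (Cospan j k) :=
  let ⟨l, f, g, _⟩ := IsFilteredOrEmpty.cocone_objs j k
  ⟨⟨l, f, g⟩⟩

instance : IsDirectedOrder (Cospan j k) where
  directed s t := by
    obtain ⟨l, a, b, h₁, h₂⟩ := IsFiltered.bowtie s.inl t.inl s.inr t.inr
    exact ⟨⟨l, s.inl ≫ a, s.inr ≫ a⟩, ⟨a, rfl, rfl⟩, ⟨b, h₁.symm, h₂.symm⟩⟩

end Cospan

structure Elem (F : J ⥤ MetCat) where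
  j : J
  x : F.obj j

namespace Elem

variable {F : J ⥤ MetCat}

def map (p : Elem F) {l : J} (f : p.j ⟶ l) : Elem F := ⟨l, (F.map f).1 p.x⟩

def edistAt (p q : Elem F) (s : Cospan p.j q.j) : ℝ≥0∞ :=
  edist ((F.map s.inl).1 p.x) ((F.map s.inr).1 q.x)

lemma edistAt_antitone (p q : Elem F) : Antitone (p.edistAt q) := by
  rintro s t ⟨w, h₁, h₂⟩
  simp only [edistAt, ← h₁, ← h₂, map_comp_apply]
  exact edist_apply_le _ _ _

noncomputable def colimEdist (p q : Elem F) : ℝ≥0∞ := ⨅ s, p.edistAt q s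

lemma colimEdist_le_edistAt (p q : Elem F) (s : Cospan p.j q.j) :
    p.colimEdist q ≤ p.edistAt q s :=
  iInf_le _ s

lemma colimEdist_mk_le {j : J} (x y : F.obj j) :
    colimEdist ⟨j, x⟩ ⟨j, y⟩ ≤ edist x y := by
  simpa [edistAt] using colimEdist_le_edistAt ⟨j, x⟩ ⟨j, y⟩ ⟨j, 𝟙 j, 𝟙 j⟩

lemma colimEdist_comm (p q : Elem F) : p.colimEdist q = q.colimEdist p := by
  have swap (a b : Elem F) : a.colimEdist b ≤ b.colimEdist a := le_iInf fun s =>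
    (colimEdist_le_edistAt a b ⟨s.pt, s.inr, s.inl⟩).trans_eq (edist_comm _ _)
  exact le_antisymm (swap p q) (swap q p)

lemma colimEdist_triangle [IsFilteredOrEmpty J] (p q r : Elem F) :
    p.colimEdist r ≤ p.colimEdist q + q.colimEdist r := by
  unfold colimEdist
  rw [ENNReal.iInf_add]
  refine le_iInf fun s => ?_
  rw [ENNReal.add_iInf]
  refine le_iInf fun t => ?_
  obtain ⟨l, a, b, h⟩ := IsFiltered.span s.inr t.inl
  calc p.colimEdist r ≤ p.edistAt r ⟨l, s.inl ≫ a, t.inr ≫ b⟩ :=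
        colimEdist_le_edistAt _ _ _
    _ ≤ edist ((F.map (s.inl ≫ a)).1 p.x) ((F.map (s.inr ≫ a)).1 q.x)
        + edist ((F.map (t.inl ≫ b)).1 q.x) ((F.map (t.inr ≫ b)).1 r.x) := by
      rw [h]; exact edist_triangle _ _ _
    _ ≤ p.edistAt q s + q.edistAt r t := by
      simp only [map_comp_apply]
      exact add_le_add (edist_apply_le _ _ _) (edist_apply_le _ _ _)

noncomputable instance [IsFilteredOrEmpty J] : PseudoEMetricSpace (Elem F) where
  edist := colimEdist
  edist_self p := nonpos_iff_eq_zero.1 <| (colimEdist_mk_le p.x p.x).trans_eq (edist_self _)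
  edist_comm := colimEdist_comm
  edist_triangle := colimEdist_triangle

lemma colimEdist_map_self (p : Elem F) {l : J} (f : p.j ⟶ l) : (p.map f).colimEdist p = 0 :=
  nonpos_iff_eq_zero.1 <| by
    simpa [edistAt, map] using colimEdist_le_edistAt (p.map f) p ⟨l, 𝟙 l, f⟩

def toPt (c : Cocone F) (p : Elem F) : c.pt := (c.ι.app p.j).1 p.x

lemma toPt_map (c : Cocone F) (p : Elem F) {l : J} (f : p.j ⟶ l) :
    (p.map f).toPt c = p.toPt c :=
  ι_map_apply c f p.x

lemma hom_toPt {c c' : Cocone F} (f : c ⟶ c') (p : Elem F) : f.hom.1 (p.toPt c) = p.toPt c' :=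
  congrFun (congrArg Subtype.val (f.w p.j)) p.x

lemma edist_toPt_le (c : Cocone F) (p q : Elem F) :
    edist (p.toPt c) (q.toPt c) ≤ p.colimEdist q :=
  le_iInf fun s => by
    rw [← toPt_map c p s.inl, ← toPt_map c q s.inr]
    exact edist_apply_le _ _ _

end Elem

open Elem

structure IsExplicitColimit {F : J ⥤ MetCat} (c : Cocone F) : Prop where
  surjective : Function.Surjective fun p : Elem F => p.toPt c
  edist_toPt : ∀ p q : Elem F, edist (p.toPt c) (q.toPt c) = p.colimEdist q

namespace IsExplicitColimit

variable {F : J ⥤ MetCat} {c : Cocone F}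

lemma edist_toPt_le (h : IsExplicitColimit c) (s : Cocone F) (p q : Elem F) :
    edist (p.toPt s) (q.toPt s) ≤ edist (p.toPt c) (q.toPt c) :=
  (h.edist_toPt p q).symm ▸ Elem.edist_toPt_le s p q

noncomputable def descFun (h : IsExplicitColimit c) (s : Cocone F) (z : c.pt) : s.pt :=
  (Function.surjInv h.surjective z).toPt s

lemma descFun_toPt (h : IsExplicitColimit c) (s : Cocone F) (p : Elem F) :
    h.descFun s (p.toPt c) = p.toPt s :=
  edist_eq_zero.1 <| nonpos_iff_eq_zero.1 <| (h.edist_toPt_le s _ p).trans_eq <| by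
    rw [Function.surjInv_eq h.surjective, edist_self]

noncomputable def isColimit (h : IsExplicitColimit c) : IsColimit c where
  desc s := ⟨h.descFun s, LipschitzWith.of_edist_le fun z w => by
    obtain ⟨p, rfl⟩ := h.surjective z
    obtain ⟨q, rfl⟩ := h.surjective w
    simp only [descFun_toPt]
    exact h.edist_toPt_le s p q⟩
  fac s j := Subtype.ext <| funext fun x => h.descFun_toPt s ⟨j, x⟩
  uniq s m hm := Subtype.ext <| funext fun z => by
    obtain ⟨p, rfl⟩ := h.surjective z
    exact (congrFun (congrArg Subtype.val (hm p.j)) p.x).trans (h.descFun_toPt s p).symm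

lemma ofIso (h : IsExplicitColimit c) {c' : Cocone F} (e : c ≅ c') : IsExplicitColimit c' where
  surjective z := by
    obtain ⟨p, hp⟩ := h.surjective (e.inv.hom.1 z)
    refine ⟨p, ?_⟩
    simp only at hp ⊢
    rw [← hom_toPt e.hom, hp]
    exact inv_hom_id_apply ((Cocone.forget F).mapIso e) z
  edist_toPt p q := by
    rw [← hom_toPt e.hom, ← hom_toPt e.hom, ← h.edist_toPt]
    exact edist_iso_hom_apply ((Cocone.forget F).mapIso e) _ _

end IsExplicitColimit

section Explicit

variable [IsFilteredOrEmpty J]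

noncomputable def explicitCocone (F : J ⥤ MetCat) : Cocone F where
  pt := ⟨SeparationQuotient (Elem F)⟩
  ι.app j := ⟨fun x => SeparationQuotient.mk ⟨j, x⟩, LipschitzWith.of_edist_le fun x y =>
    (SeparationQuotient.edist_mk _ _).trans_le (colimEdist_mk_le x y)⟩
  ι.naturality j _ f := Subtype.ext <| funext fun x =>
    SeparationQuotient.mk_eq_mk.2 <| EMetric.inseparable_iff.2 <|
      colimEdist_map_self (⟨j, x⟩ : Elem F) f

lemma isExplicitColimit_explicitCocone (F : J ⥤ MetCat) :
    IsExplicitColimit (explicitCocone F) where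
  surjective := SeparationQuotient.surjective_mk
  edist_toPt := SeparationQuotient.edist_mk

lemma isExplicitColimit_of_isColimit {F : J ⥤ MetCat} {c : Cocone F} (hc : IsColimit c) :
    IsExplicitColimit c :=
  (isExplicitColimit_explicitCocone F).ofIso
    ((isExplicitColimit_explicitCocone F).isColimit.uniqueUpToIso hc)

end Explicit

variable {n : ℕ} {F : Fin n → J ⥤ MetCat}

def Elem.proj (p : Elem (prodDiagram F)) (i : Fin n) : Elem (F i) := ⟨p.j, p.x i⟩

lemma Elem.colimEdist_prodDiagram [IsFilteredOrEmpty J] (p q : Elem (prodDiagram F)) :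
    p.colimEdist q = ⨆ i, (p.proj i).colimEdist (q.proj i) := by
  have h (s : Cospan p.j q.j) : p.edistAt q s = ⨆ i, (p.proj i).edistAt (q.proj i) s :=
    edist_pi_eq_iSup (A := fun i => (F i).obj s.pt) _ _
  simp_rw [colimEdist, h]
  exact iInf_iSup_of_antitone fun i => edistAt_antitone _ _

lemma isExplicitColimit_prodCocone [IsFiltered J] {c : ∀ i, Cocone (F i)}
    (h : ∀ i, IsExplicitColimit (c i)) : IsExplicitColimit (prodCocone c) where
  surjective z := by
    classical
    choose p hp using fun i => (h i).surjective (z i)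
    obtain ⟨l, hl⟩ := IsFiltered.sup_objs_exists (Finset.univ.image fun i => (p i).j)
    have f (i : Fin n) : (p i).j ⟶ l := (hl (Finset.mem_image_of_mem _ (Finset.mem_univ i))).some
    refine ⟨⟨l, fun i => ((p i).map (f i)).x⟩, funext fun i => ?_⟩
    exact (toPt_map (c i) (p i) (f i)).trans (hp i)
  edist_toPt p q := by
    rw [colimEdist_prodDiagram, ← iSup_congr fun i => (h i).edist_toPt _ _]
    exact edist_pi_eq_iSup (A := fun i => (c i).pt) _ _

end MetCat

/-- In `Met`, finite products commute with filtered colimits: for every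
finite family of filtered diagrams, the product of the colimits is the colimit of the
(pointwise) products, i.e. the canonical comparison is an isomorphism. -/
theorem Met_finite_products_commute_with_filtered_colimits
    (J : Type) [SmallCategory J] [IsFiltered J] (n : ℕ)
    (F : Fin n → J ⥤ MetCat) (c : ∀ i, Cocone (F i))
    (hc : ∀ i, Nonempty (IsColimit (c i))) :
    Nonempty (IsColimit (MetCat.prodCocone c)) :=
  ⟨(MetCat.isExplicitColimit_prodCocone fun i =>
    MetCat.isExplicitColimit_of_isColimit (hc i).some).isColimit⟩
end

section
/- The forgetful functor V : Norm → Met from the category of generalized normed complex vector spaces and linear maps of norm ≤ 1 to the category of generalized metric spaces and nonexpanding maps is monadic. -/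
open CategoryTheory CategoryTheory.Limits ENNReal NNReal

/-- A generalized normed complex vector space: the norm takes values in `[0,∞]`. -/
structure NormCat : Type 1 where
  /-- the underlying type -/
  carrier : Type
  [addCommGroup : AddCommGroup carrier]
  [module : Module ℂ carrier]
  /-- the (extended) norm -/
  enorm : carrier → ℝ≥0∞
  enorm_eq_zero : ∀ x : carrier, enorm x = 0 ↔ x = 0
  enorm_add : ∀ x y : carrier, enorm (x + y) ≤ enorm x + enorm y
  enorm_smul : ∀ (c : ℂ) (x : carrier), enorm (c • x) = (‖c‖₊ : ℝ≥0∞) * enorm x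

attribute [instance] NormCat.addCommGroup NormCat.module

/-- Morphisms of generalized normed spaces: linear maps of norm `≤ 1`. -/
instance : Category NormCat where
  Hom A B := {f : A.carrier →ₗ[ℂ] B.carrier // ∀ x, B.enorm (f x) ≤ A.enorm x}
  id A := ⟨LinearMap.id, fun x => le_rfl⟩
  comp f g := ⟨g.1.comp f.1, fun x => le_trans (g.2 (f.1 x)) (f.2 x)⟩
  id_comp f := Subtype.ext (LinearMap.comp_id f.1)
  comp_id f := Subtype.ext (LinearMap.id_comp f.1)
  assoc f g h := Subtype.ext (LinearMap.comp_assoc f.1 g.1 h.1).symm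

/-- The metric induced by a generalized norm: `d(x,y) = ‖x - y‖`. -/
noncomputable def NormCat.emetric (A : NormCat) : EMetricSpace A.carrier where
  edist x y := A.enorm (x - y)
  edist_self x := by
    show A.enorm (x - x) = 0
    rw [sub_self]
    exact (A.enorm_eq_zero 0).mpr rfl
  edist_comm x y := by
    show A.enorm (x - y) = A.enorm (y - x)
    calc A.enorm (x - y) = A.enorm ((-1 : ℂ) • (y - x)) := by
          rw [neg_one_smul, neg_sub]
      _ = (‖(-1 : ℂ)‖₊ : ℝ≥0∞) * A.enorm (y - x) := A.enorm_smul _ _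
      _ = A.enorm (y - x) := by
          rw [nnnorm_neg, nnnorm_one]
          simp
  edist_triangle x y z := by
    show A.enorm (x - z) ≤ A.enorm (x - y) + A.enorm (y - z)
    calc A.enorm (x - z) = A.enorm ((x - y) + (y - z)) := by rw [sub_add_sub_cancel]
      _ ≤ A.enorm (x - y) + A.enorm (y - z) := A.enorm_add _ _
  eq_of_edist_eq_zero := by
    intro x y h
    have : x - y = 0 := (A.enorm_eq_zero (x - y)).mp h
    exact sub_eq_zero.mp this

/-- The forgetful functor `Norm ⥤ Met`, sending a generalized normed space to its
underlying generalized metric space with `d(x,y) = ‖x - y‖`. -/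
noncomputable def normForget : NormCat ⥤ MetCat where
  obj A := @MetCat.mk A.carrier A.emetric
  map {A B} f := ⟨fun x => f.1 x,
    @LipschitzWith.of_edist_le A.carrier B.carrier
      A.emetric.toPseudoEMetricSpace B.emetric.toPseudoEMetricSpace
      (fun x => f.1 x) (fun x y => by
        have h := f.2 (x - y)
        rw [map_sub] at h
        exact h)⟩
  map_id A := Subtype.ext rfl
  map_comp f g := Subtype.ext rfl

/-!
The left adjoint sends a metric space `X` to the finitely supported combinations `X →₀ ℂ` with
the Arens–Eells transport norm: the cheapest way to write `a = ∑ cᵢ (δ xᵢ - δ yᵢ)`, at cost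
`∑ ‖cᵢ‖ d(xᵢ, yᵢ)`. By construction it is the largest norm for which `x ↦ δ x` is nonexpanding,
which gives the universal property, and it is nondegenerate because `1`-Lipschitz bump
functions separate the points of a finite support.

For monadicity, forget the metric first: an algebra `ev : (M →₀ ℂ) → M` for the free-module
monad on types is the same as a module structure on `M`, with `u + v = ev (δ u + δ v)` and
`c • u = ev (c δ u)`. That `ev` is nonexpanding for the transport norm then says exactly that
each `u ↦ c • u + w` is `‖c‖`-Lipschitz, i.e. that `d(u, 0)` is a norm inducing `d`. So every
algebra comes from a normed space, and algebra maps, which commute with `ev`, are linear.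
-/

open Finsupp

noncomputable section

/-- An Eilenberg–Moore algebra for the free `R`-module monad `M ↦ M →₀ R` on types, whose unit is
`single · 1` and whose multiplication is `linearCombination R id`. -/
structure IsFreeModuleAlgebra (R : Type*) {M : Type*} [Semiring R] (ev : (M →₀ R) → M) :
    Prop where
  eval_single_one : ∀ m, ev (single m 1) = m
  eval_mapDomain_eval : ∀ W : (M →₀ R) →₀ R, ev (mapDomain ev W) = ev (linearCombination R id W)

namespace IsFreeModuleAlgebra

variable {R M : Type*} [Ring R] {ev : (M →₀ R) → M} (h : IsFreeModuleAlgebra R ev)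
include h

theorem surjective : Function.Surjective ev :=
  fun m => ⟨single m 1, h.eval_single_one m⟩

theorem eval_smul_add_smul (a b : R) (w w' : M →₀ R) :
    ev (a • w + b • w') = ev (single (ev w) a + single (ev w') b) := by
  simpa [mapDomain_add] using (h.eval_mapDomain_eval (single w a + single w' b)).symm

theorem eval_add (w w' : M →₀ R) : ev (w + w') = ev (single (ev w) 1 + single (ev w') 1) := by
  simpa using h.eval_smul_add_smul 1 1 w w'

theorem eval_smul (c : R) (w : M →₀ R) : ev (c • w) = ev (single (ev w) c) := by
  simpa using h.eval_smul_add_smul c 0 w 0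

protected abbrev addCommGroup : AddCommGroup M :=
  letI : Zero M := ⟨ev 0⟩
  letI : Add M := ⟨fun u v => ev (single u 1 + single v 1)⟩
  letI : Neg M := ⟨fun u => ev (single u (-1))⟩
  letI : Sub M := ⟨fun u v => ev (single u 1 + single v (-1))⟩
  letI : SMul ℕ M := ⟨fun n u => ev (single u n)⟩
  letI : SMul ℤ M := ⟨fun n u => ev (single u n)⟩
  h.surjective.addCommGroup ev rfl h.eval_add
    (fun w => by rw [← neg_one_smul R w]; exact h.eval_smul (-1) w)
    (fun w w' => by
      have := h.eval_smul_add_smul 1 (-1) w w'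
      rwa [one_smul, neg_one_smul, ← sub_eq_add_neg] at this)
    (fun w n => by rw [← Nat.cast_smul_eq_nsmul R n w]; exact h.eval_smul n w)
    (fun w n => by rw [← Int.cast_smul_eq_zsmul R n w]; exact h.eval_smul n w)

protected abbrev module : letI := h.addCommGroup; Module R M :=
  letI := h.addCommGroup
  letI : SMul R M := ⟨fun c u => ev (single u c)⟩
  h.surjective.module R ⟨⟨ev, rfl⟩, h.eval_add⟩ h.eval_smul

theorem eval_eq_linearCombination (w : M →₀ R) :
    letI := h.addCommGroup; letI := h.module; ev w = linearCombination R id w := by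
  let := h.addCommGroup; let := h.module
  induction w using Finsupp.induction_linear with
  | zero => exact (map_zero _).symm
  | add w w' hw hw' => rw [map_add, ← hw, ← hw']; exact h.eval_add w w'
  | single m c => rw [linearCombination_single]; rfl

end IsFreeModuleAlgebra

theorem IsLinearMap.of_map_linearCombination {R M N : Type*} [Semiring R] [AddCommMonoid M]
    [Module R M] [AddCommMonoid N] [Module R N] {φ : M → N}
    (h : ∀ w : M →₀ R, φ (linearCombination R id w) = linearCombination R id (mapDomain φ w)) :
    IsLinearMap R φ where
  map_add x y := by
    have hxy := h (single x 1 + single y 1)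
    simpa only [mapDomain_add, mapDomain_single, LinearMap.map_add, linearCombination_single,
      id_eq, one_smul] using hxy
  map_smul c x := by
    simpa only [mapDomain_single, linearCombination_single, id_eq] using h (single x c)

section TransportNorm

variable {𝕜 X : Type*} [NormedField 𝕜] [PseudoEMetricSpace X]

theorem eq_enorm_mul_of_smul_le {E : Type*} [AddCommMonoid E] [Module 𝕜 E] {N : E → ℝ≥0∞}
    (h : ∀ (c : 𝕜) u, N (c • u) ≤ ‖c‖ₑ * N u) (c : 𝕜) (u : E) : N (c • u) = ‖c‖ₑ * N u := by
  rcases eq_or_ne c 0 with rfl | hc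
  · simpa using h 0 u
  refine (h c u).antisymm ?_
  rw [ENNReal.mul_le_iff_le_inv (enorm_ne_zero.2 hc) enorm_ne_top, ← enorm_inv hc]
  simpa [smul_smul, hc] using h c⁻¹ (c • u)

def transportSum (l : List (𝕜 × X × X)) : X →₀ 𝕜 :=
  (l.map fun p => p.1 • (single p.2.1 1 - single p.2.2 1)).sum

def transportCost (l : List (𝕜 × X × X)) : ℝ≥0∞ :=
  (l.map fun p => ‖p.1‖ₑ * edist p.2.1 p.2.2).sum

/-- The Arens–Eells (Kantorovich–Rubinstein) norm. It is `∞` on every `a` whose coefficients do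
not sum to `0`. -/
def transportNorm (a : X →₀ 𝕜) : ℝ≥0∞ :=
  ⨅ (l : List (𝕜 × X × X)) (_ : transportSum l = a), transportCost l

theorem transportNorm_le {a : X →₀ 𝕜} {l : List (𝕜 × X × X)} (h : transportSum l = a) :
    transportNorm a ≤ transportCost l :=
  iInf₂_le l h

@[simp]
theorem transportNorm_zero : transportNorm (0 : X →₀ 𝕜) = 0 :=
  nonpos_iff_eq_zero.1 (transportNorm_le (l := []) rfl)

theorem transportNorm_add_le (a b : X →₀ 𝕜) :
    transportNorm (a + b) ≤ transportNorm a + transportNorm b := by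
  simp only [transportNorm, ENNReal.iInf_add, ENNReal.add_iInf]
  refine le_iInf₂ fun lb hb => le_iInf₂ fun la ha => ?_
  refine (transportNorm_le (l := la ++ lb) ?_).trans_eq ?_
  · simp [transportSum, ← ha, ← hb]
  · simp [transportCost]

theorem transportNorm_smul_le (c : 𝕜) (a : X →₀ 𝕜) :
    transportNorm (c • a) ≤ ‖c‖ₑ * transportNorm a := by
  rcases eq_or_ne c 0 with rfl | hc
  · simp
  simp only [transportNorm, ENNReal.mul_iInf_of_ne (enorm_ne_zero.2 hc) enorm_ne_top]
  refine le_iInf₂ fun l hl => ?_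
  refine (transportNorm_le (l := l.map fun p => (c * p.1, p.2)) ?_).trans_eq ?_
  · simp [transportSum, ← hl, List.smul_sum, Function.comp_def, mul_smul]
  · simp [transportCost, ← List.sum_map_mul_left, Function.comp_def, mul_assoc]

theorem transportNorm_single_sub_single_le (x y : X) :
    transportNorm (single x (1 : 𝕜) - single y 1) ≤ edist x y :=
  (transportNorm_le (l := [(1, x, y)]) (by simp [transportSum])).trans_eq (by simp [transportCost])

theorem transportNorm_smul (c : 𝕜) (a : X →₀ 𝕜) :
    transportNorm (c • a) = ‖c‖ₑ * transportNorm a :=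
  eq_enorm_mul_of_smul_le (E := X →₀ 𝕜) (N := transportNorm) transportNorm_smul_le c a

theorem apply_linearCombination_le_transportNorm {E : Type*} [AddCommGroup E] [Module 𝕜 E]
    (N : E → ℝ≥0∞) (N_add : ∀ u v, N (u + v) ≤ N u + N v)
    (N_smul : ∀ (c : 𝕜) u, N (c • u) ≤ ‖c‖ₑ * N u) {f : X → E}
    (hf : ∀ x y, N (f x - f y) ≤ edist x y) (a : X →₀ 𝕜) :
    N (linearCombination 𝕜 f a) ≤ transportNorm a := by
  refine le_iInf₂ fun l hl => ?_
  subst hl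
  induction l with
  | nil => simpa [transportSum, transportCost] using N_smul 0 0
  | cons p l ih =>
    simp only [transportSum, transportCost, List.map_cons, List.sum_cons, map_add, map_smul,
      map_sub, linearCombination_single, one_smul] at ih ⊢
    exact (N_add _ _).trans (add_le_add ((N_smul _ _).trans (mul_le_mul_right (hf _ _) _)) ih)

end TransportNorm

theorem exists_lipschitzWith_bump {X : Type*} [EMetricSpace X] {x₀ : X} {s : Finset X}
    (hx₀ : x₀ ∉ s) : ∃ f : X → ℝ≥0, LipschitzWith 1 f ∧ f x₀ ≠ 0 ∧ ∀ y ∈ s, f y = 0 := by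
  set r := min 1 (s.inf (edist x₀))
  have hr₀ : 0 < r := lt_min one_pos <| (Finset.lt_inf_iff zero_lt_top).2 fun y hy =>
    edist_pos.2 fun h => hx₀ (h ▸ hy)
  have hr : r ≠ ∞ := ne_top_of_le_ne_top one_ne_top (min_le_left _ _)
  have hfin : ∀ z, r - edist x₀ z ≠ ∞ := fun z => ne_top_of_le_ne_top hr tsub_le_self
  have key : ∀ z w, (r - edist x₀ z) - (r - edist x₀ w) ≤ edist z w := fun z w =>
    tsub_tsub_tsub_le_tsub.trans (tsub_le_iff_left.2 (edist_triangle x₀ z w))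
  refine ⟨fun z => (r - edist x₀ z).toNNReal, LipschitzWith.of_edist_le fun z w => ?_, ?_,
    fun y hy => ?_⟩
  · rw [edist_nndist, NNReal.nndist_eq, ENNReal.coe_max, ENNReal.coe_sub, ENNReal.coe_sub,
      coe_toNNReal (hfin z), coe_toNNReal (hfin w)]
    exact max_le (key z w) (edist_comm z w ▸ key w z)
  · simpa [ENNReal.toNNReal_eq_zero_iff, hr] using hr₀.ne'
  · have hry : r ≤ edist x₀ y := (min_le_right _ _).trans (Finset.inf_le hy)
    simp only [tsub_eq_zero_of_le hry, toNNReal_zero]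

theorem transportNorm_eq_zero {𝕜 X : Type*} [RCLike 𝕜] [EMetricSpace X] {a : X →₀ 𝕜} :
    transportNorm a = 0 ↔ a = 0 := by
  classical
  refine ⟨fun h => ?_, fun h => h ▸ transportNorm_zero⟩
  by_contra ha
  obtain ⟨x₀, hx₀⟩ := support_nonempty_iff.2 ha
  obtain ⟨f, hf, hfx₀, hfs⟩ := exists_lipschitzWith_bump (Finset.notMem_erase x₀ a.support)
  set g : X → 𝕜 := fun x => ((f x : ℝ) : 𝕜)
  have hg : LipschitzWith 1 g := by
    simpa [g, Function.comp_def] using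
      RCLike.ofRealLI.lipschitz.comp (NNReal.isometry_coe.lipschitz.comp hf)
  have hval : linearCombination 𝕜 g a = a x₀ * g x₀ := by
    rw [linearCombination_apply]
    refine sum_eq_single x₀ (fun y hy hyx => ?_) (by simp)
    simp [g, hfs y (Finset.mem_erase.2 ⟨hyx, mem_support_iff.2 hy⟩)]
  have := apply_linearCombination_le_transportNorm (‖·‖ₑ) enorm_add_le
    (fun c u => (enorm_smul c u).le) (f := g)
    (fun x y => by simpa [edist_eq_enorm_sub] using hg x y) a
  rw [h, hval, nonpos_iff_eq_zero, enorm_eq_zero] at this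
  exact mul_ne_zero (mem_support_iff.1 hx₀) (by simpa [g] using hfx₀) this

theorem lipschitzWith_smul_add_of_linearCombination {𝕜 E : Type*} [NormedField 𝕜]
    [AddCommGroup E] [Module 𝕜 E] [PseudoEMetricSpace E]
    (h : ∀ w w' : E →₀ 𝕜, edist (linearCombination 𝕜 id w) (linearCombination 𝕜 id w') ≤
      transportNorm (w - w'))
    (c : 𝕜) (w : E) : LipschitzWith ‖c‖₊ fun u => c • u + w := fun u v => by
  have huv := h (single u c + single w 1) (single v c + single w 1)
  have hdiff : single u c + single w 1 - (single v c + single w 1) =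
      c • (single u (1 : 𝕜) - single v 1) := by
    simp [smul_sub]
  rw [hdiff, transportNorm_smul] at huv
  simp only [map_add, linearCombination_single, id_eq, one_smul] at huv
  exact huv.trans (mul_le_mul_right (transportNorm_single_sub_single_le u v) _)

namespace NormCat

def ofModule (E : Type) [AddCommGroup E] [Module ℂ E] [EMetricSpace E]
    (h : ∀ (c : ℂ) (w : E), LipschitzWith ‖c‖₊ fun u => c • u + w) : NormCat where
  carrier := E
  enorm u := edist u 0
  enorm_eq_zero _ := edist_eq_zero
  enorm_add u v := calc
    edist (u + v) 0 ≤ edist (u + v) (0 + v) + edist (0 + v) 0 := edist_triangle _ _ _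
    _ ≤ edist u 0 + edist v 0 := by
      rw [zero_add]
      gcongr
      simpa using (h 1 v).edist_le_mul u 0
  enorm_smul := eq_enorm_mul_of_smul_le fun c u => by
    simpa [enorm_eq_nnnorm] using (h c 0).edist_le_mul u 0

def ofModuleIso (E : Type) [AddCommGroup E] [Module ℂ E] [EMetricSpace E]
    (h : ∀ (c : ℂ) (w : E), LipschitzWith ‖c‖₊ fun u => c • u + w) :
    normForget.obj (ofModule E h) ≅ MetCat.mk E :=
  have hd : ∀ u v : E, edist (u - v) 0 = edist u v := fun u v => le_antisymm
    (by simpa [sub_eq_add_neg] using (h 1 (-v)).edist_le_mul u v)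
    (by simpa using (h 1 v).edist_le_mul (u - v) 0)
  { hom := ⟨id, LipschitzWith.of_edist_le fun u v => (hd u v).ge⟩
    inv := ⟨id, LipschitzWith.of_edist_le fun u v => (hd u v).le⟩
    hom_inv_id := rfl
    inv_hom_id := rfl }

abbrev free (X : MetCat) : NormCat where
  carrier := X →₀ ℂ
  enorm := transportNorm
  enorm_eq_zero _ := transportNorm_eq_zero
  enorm_add := transportNorm_add_le
  enorm_smul := transportNorm_smul

def freeHomEquiv (X : MetCat) (A : NormCat) : (free X ⟶ A) ≃ (X ⟶ normForget.obj A) where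
  toFun φ := ⟨fun x => φ.1 (single x 1), LipschitzWith.of_edist_le fun x y => by
    show A.enorm (φ.1 (single x 1) - φ.1 (single y 1)) ≤ _
    rw [← map_sub]
    exact (φ.2 _).trans (transportNorm_single_sub_single_le x y)⟩
  invFun f := ⟨linearCombination ℂ f.1, apply_linearCombination_le_transportNorm A.enorm
    A.enorm_add (fun c u => (A.enorm_smul c u).le) (fun x y => (f.2 x y).trans_eq (one_mul _))⟩
  left_inv φ := Subtype.ext <| lhom_ext fun x c => by
    rw [linearCombination_single, ← map_smul, smul_single_one]
  right_inv f := Subtype.ext <| funext fun x =>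
    (linearCombination_single (M := A.carrier) (v := f.1) ℂ 1 x).trans
      (one_smul ℂ (α := A.carrier) (f.1 x))

def freeFunctor : MetCat ⥤ NormCat :=
  Adjunction.leftAdjointOfEquiv freeHomEquiv fun _ _ _ _ _ => rfl

def freeAdjunction : freeFunctor ⊣ normForget :=
  Adjunction.adjunctionOfEquivLeft _ _

theorem freeFunctor_map_apply {X Y : MetCat} (f : X ⟶ Y) (w : X →₀ ℂ) :
    (freeFunctor.map f).1 w = mapDomain f.1 w := by
  show linearCombination ℂ (fun x => single (f.1 x) 1) w = mapDomain f.1 w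
  induction w using induction_linear <;> simp_all [mapDomain_add]

variable (S : freeAdjunction.toMonad.Algebra)

theorem algebra_isFreeModuleAlgebra :
    IsFreeModuleAlgebra ℂ (S.a.1 : (S.A.carrier →₀ ℂ) → S.A.carrier) where
  eval_single_one u := congrFun (congrArg Subtype.val S.unit) u
  eval_mapDomain_eval W := (congrArg S.a.1 (freeFunctor_map_apply S.a W)).symm.trans
    (congrFun (congrArg Subtype.val S.assoc) W).symm

def ofAlgebra : NormCat :=
  letI := (algebra_isFreeModuleAlgebra S).addCommGroup
  letI := (algebra_isFreeModuleAlgebra S).module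
  ofModule S.A <| lipschitzWith_smul_add_of_linearCombination fun w w' => by
    rw [← (algebra_isFreeModuleAlgebra S).eval_eq_linearCombination,
      ← (algebra_isFreeModuleAlgebra S).eval_eq_linearCombination]
    exact (S.a.2 w w').trans_eq (one_mul _)

def ofAlgebraIso : normForget.obj (ofAlgebra S) ≅ S.A :=
  letI := (algebra_isFreeModuleAlgebra S).addCommGroup
  letI := (algebra_isFreeModuleAlgebra S).module
  ofModuleIso S.A _

theorem linearCombination_ofAlgebra (w : S.A.carrier →₀ ℂ) :
    linearCombination ℂ (M := (ofAlgebra S).carrier) id w = S.a.1 w :=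
  ((algebra_isFreeModuleAlgebra S).eval_eq_linearCombination w).symm

end NormCat

open NormCat

instance : normForget.Faithful where
  map_injective h := Subtype.ext <| LinearMap.ext fun x => congrFun (congrArg Subtype.val h) x

instance : (Monad.comparison freeAdjunction).Full where
  map_surjective {A B} f := by
    let φ : A.carrier → B.carrier := f.f.1
    have hφ : ∀ w, φ (linearCombination ℂ id w) = linearCombination ℂ id (mapDomain φ w) :=
      fun w => (congrFun (congrArg Subtype.val f.h) w).symm.trans
        (congrArg (linearCombination ℂ (id : B.carrier → B.carrier)) (freeFunctor_map_apply f.f w))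
    have hlin := IsLinearMap.of_map_linearCombination hφ
    refine ⟨⟨hlin.mk' _, fun x => ?_⟩, Monad.Algebra.Hom.ext (Subtype.ext rfl)⟩
    calc B.enorm (φ x) = B.enorm (φ x - φ 0) := by rw [hlin.map_zero, sub_zero]
      _ ≤ A.enorm (x - 0) := (f.f.2 x (0 : A.carrier)).trans_eq (one_mul _)
      _ = A.enorm x := by rw [sub_zero]

instance : (Monad.comparison freeAdjunction).EssSurj where
  mem_essImage S := ⟨ofAlgebra S, ⟨Monad.Algebra.isoMk (ofAlgebraIso S) (by
    refine Subtype.ext (funext fun (w : S.A.carrier →₀ ℂ) => ?_)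
    change S.a.1 ((freeFunctor.map (ofAlgebraIso S).hom).1 w) =
      linearCombination ℂ (M := (ofAlgebra S).carrier) id w
    rw [linearCombination_ofAlgebra]
    exact congrArg S.a.1 ((freeFunctor_map_apply (ofAlgebraIso S).hom w).trans mapDomain_id))⟩⟩

end

/-- The forgetful functor `V : Norm → Met` from generalized normed
complex vector spaces (with linear maps of norm `≤ 1`) to generalized metric spaces
(with nonexpanding maps) is monadic. -/
theorem normForget_monadic : Nonempty (MonadicRightAdjoint normForget) :=
  ⟨{ L := NormCat.freeFunctor, adj := NormCat.freeAdjunction, eqv := { } }⟩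
end
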